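/- If both logits vectors are zero-mean, Σ_j z^s_j = 0 and Σ_j z^t_j = 0, then lim_{T→∞} T·(p^s_i(T) − p^t_i(T)) = (z^s_i − z^t_i)/K for every i. -/

import Mathlib

/-!
In the inverse temperature `β = T⁻¹`, the quantity `T * (pˢᵢ - pᵗᵢ)` is the difference quotient
at `β = 0` of `β ↦ pˢᵢ(β⁻¹) - pᵗᵢ(β⁻¹)`, which vanishes at `β = 0` (there `z i / 0 = 0`, so both
softmaxes are uniform). Its limit is therefore the derivative at `0`, and `β ↦ softmax` has
derivative `(z i - mean z) / K` there, which is `z i / K` for zero-mean logits.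
-/

open Filter

noncomputable def softmax (K : ℕ) (T : ℝ) (z : Fin K → ℝ) (i : Fin K) : ℝ :=
  Real.exp (z i / T) / ∑ j, Real.exp (z j / T)

open Topology

theorem HasDerivAt.tendsto_smul_comp_inv_atTop {E : Type*} [NormedAddCommGroup E]
    [NormedSpace ℝ E] {f : ℝ → E} {f' : E} (hf : HasDerivAt f f' 0) (h0 : f 0 = 0) :
    Tendsto (fun T : ℝ => T • f T⁻¹) atTop (𝓝 f') := by
  have hslope := (hasDerivAt_iff_tendsto_slope_zero.mp hf).comp
    (tendsto_inv_atTop_nhdsGT_zero.mono_right (nhdsWithin_mono _ fun x hx => ne_of_gt hx))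
  simpa [Function.comp_def, h0] using hslope

theorem hasDerivAt_softmax_inv {K : ℕ} (z : Fin K → ℝ) (i : Fin K) :
    HasDerivAt (fun β : ℝ => softmax K β⁻¹ z i) ((z i - (∑ j, z j) / K) / K) 0 := by
  have hK : (K : ℝ) ≠ 0 := Nat.cast_ne_zero.mpr i.pos.ne'
  have hexp : ∀ j, HasDerivAt (fun β : ℝ => Real.exp (z j * β)) (z j) 0 := fun j => by
    simpa using ((hasDerivAt_id (0 : ℝ)).const_mul (z j)).exp
  have hsum : ∑ j, Real.exp (z j * 0) = K := by simp
  simp only [softmax, div_inv_eq_mul]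
  refine ((hexp i).fun_div (HasDerivAt.fun_sum fun j _ => hexp j) (hsum ▸ hK)).congr_deriv ?_
  rw [hsum]
  field_simp
  simp

theorem kd_grad_limit_zero_mean_general (K : ℕ) (zt zs : Fin K → ℝ)
    (hs : ∑ j, zs j = 0) (ht : ∑ j, zt j = 0) :
    ∀ i, Tendsto (fun T : ℝ => T * (softmax K T zs i - softmax K T zt i)) atTop
      (nhds ((zs i - zt i) / (K : ℝ))) := by
  intro i
  have hderiv := (hasDerivAt_softmax_inv zs i).sub (hasDerivAt_softmax_inv zt i)
  simp only [hs, ht, zero_div, sub_zero, ← sub_div] at hderiv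
  simpa using hderiv.tendsto_smul_comp_inv_atTop (by simp [softmax])

/-- With zero-mean logits, the high-temperature limit of the KD gradient is the
    logits-matching gradient `(zˢ_i − zᵗ_i)/K`, for every `i`. -/
theorem kd_grad_limit_zero_mean (K : ℕ) (hK : 1 ≤ K) (zt zs : Fin K → ℝ)
    (hs : ∑ j, zs j = 0) (ht : ∑ j, zt j = 0) :
    ∀ i, Tendsto (fun T : ℝ => T * (softmax K T zs i - softmax K T zt i)) atTop
      (nhds ((zs i - zt i) / (K : ℝ))) :=
  kd_grad_limit_zero_mean_general K zt zs hs ht
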